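/- Let b be a unimodular complex number and α a primitive third root of unity. If |1 − α + b| = 2 then b = ᾱ or b = −ᾱ. -/

import Mathlib

/-!
Since `conj α = α²` and `conj b = b⁻¹`, expanding `|1 - α + b|² = 4` and multiplying by `b` gives
`(1 - α) ((1 + α) b² + 1) = 0`, using `(1 - α)(1 - α²) = 3`. As `1 + α = -α²`, this says `b² = α = (α²)²`.
-/

open ComplexConjugate

theorem sq_add_self_add_one_eq_zero_of_pow_three_eq_one {R : Type*} [CommRing R] [IsDomain R]
    {α : R} (hα : α ^ 3 = 1) (hα1 : α ≠ 1) : α ^ 2 + α + 1 = 0 := by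
  have h : (α - 1) * (α ^ 2 + α + 1) = 0 := by linear_combination hα
  exact (mul_eq_zero.mp h).resolve_left (sub_ne_zero.mpr hα1)

theorem Complex.conj_eq_sq_of_pow_three_eq_one {α : ℂ} (hα : α ^ 3 = 1) : conj α = α ^ 2 := by
  rw [← Complex.inv_eq_conj (Complex.norm_eq_one_of_pow_eq_one hα three_ne_zero)]
  exact inv_eq_of_mul_eq_one_right (by rw [← pow_succ', hα])

theorem Complex.sq_eq_of_norm_one_sub_add_eq_two {b α : ℂ} (hb : ‖b‖ = 1)
    (hα : α ^ 3 = 1) (hα1 : α ≠ 1) (h : ‖1 - α + b‖ = 2) : b ^ 2 = α := by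
  have hb0 : b ≠ 0 := by rintro rfl; norm_num at hb
  have hroot := sq_add_self_add_one_eq_zero_of_pow_three_eq_one hα hα1
  have hprod : (1 - α + b) * (1 - α ^ 2 + b⁻¹) = 4 := by
    have := Complex.mul_conj (1 - α + b)
    rw [Complex.normSq_eq_norm_sq, h, map_add, map_sub, map_one,
      Complex.conj_eq_sq_of_pow_three_eq_one hα, ← Complex.inv_eq_conj hb] at this
    exact_mod_cast this
  have hfactor : (1 - α) * ((1 + α) * b ^ 2 + 1) = 0 := by
    linear_combination b * hprod - (1 - α + b) * mul_inv_cancel₀ hb0 - b * hα + b * hroot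
  have hquad := (mul_eq_zero.mp hfactor).resolve_left (sub_ne_zero.mpr hα1.symm)
  linear_combination -α * hquad + b ^ 2 * hroot

theorem stmt_11 (b α : ℂ) (hb : ‖b‖ = 1)
    (hα : α ^ 3 = 1) (hα1 : α ≠ 1)
    (h : ‖1 - α + b‖ = 2) :
    b = starRingEnd ℂ α ∨ b = -starRingEnd ℂ α := by
  rw [Complex.conj_eq_sq_of_pow_three_eq_one hα]
  apply sq_eq_sq_iff_eq_or_eq_neg.mp
  rw [Complex.sq_eq_of_norm_one_sub_add_eq_two hb hα hα1 h]
  linear_combination -α * hα
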